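/- Let ℓ ≥ 1 be an integer and p, q ∈ ℝ, and set a = q+p−2ℓ+2. Then the following polynomial identity in ℝ[u] holds: u(u−1)·(d/du)[P_{ℓ−1}^{(a, −p−1)}(2u−1)] = ℓ·P_ℓ^{(a, −p−2)}(2u−1) − (u(q+1−ℓ)+p+1)·P_{ℓ−1}^{(a, −p−1)}(2u−1). -/
import Mathlib

noncomputable section

open Polynomial Finset

/-- Generalized binomial coefficient `C(r, m) = r(r−1)⋯(r−m+1)/m!` for real `r`. -/
def gchoose (r : ℝ) (m : ℕ) : ℝ := (∏ i ∈ Finset.range m, (r - i)) / (Nat.factorial m)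

/-- The Jacobi polynomial
`P_n^{(α,β)}(x) = Σ_{k=0}^{n} C(n+α, n−k)·C(n+β, k)·((x−1)/2)^k·((x+1)/2)^{n−k}`. -/
def jacobiP (n : ℕ) (a b : ℝ) : Polynomial ℝ :=
  ∑ k ∈ Finset.range (n + 1),
    Polynomial.C (gchoose (a + n) (n - k) * gchoose (b + n) k)
      * (Polynomial.C (1 / 2 : ℝ) * (Polynomial.X - 1)) ^ k
      * (Polynomial.C (1 / 2 : ℝ) * (Polynomial.X + 1)) ^ (n - k)

lemma gchoose_zero (r : ℝ) : gchoose r 0 = 1 := by simp [gchoose]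

lemma gchoose_succ (r : ℝ) (m : ℕ) :
    gchoose r (m+1) * ((m:ℝ)+1) = gchoose r m * (r - m) := by
  have h1 : (Nat.factorial m : ℝ) ≠ 0 := Nat.cast_ne_zero.mpr (Nat.factorial_ne_zero m)
  have h2 : ((m:ℝ)+1) ≠ 0 := by positivity
  rw [gchoose, gchoose, Finset.prod_range_succ, Nat.factorial_succ]
  push_cast
  field_simp

lemma gchoose_succ_succ (r : ℝ) (m : ℕ) :
    gchoose (r+1) (m+1) * ((m:ℝ)+1) = (r+1) * gchoose r m := by
  have h1 : (Nat.factorial m : ℝ) ≠ 0 := Nat.cast_ne_zero.mpr (Nat.factorial_ne_zero m)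
  have h2 : ((m:ℝ)+1) ≠ 0 := by positivity
  have h : ∏ i ∈ range (m+1), (r + 1 - (i:ℝ)) = (r+1) * ∏ i ∈ range m, (r - (i:ℝ)) := by
    rw [Finset.prod_range_succ']
    rw [mul_comm]
    congr 1
    · norm_num
    · exact Finset.prod_congr rfl fun i _ => by push_cast; ring
  rw [gchoose, gchoose, h, Nat.factorial_succ]
  push_cast
  field_simp

lemma gchoose_pascal (r : ℝ) (m : ℕ) :
    gchoose (r+1) (m+1) = gchoose r (m+1) + gchoose r m := by
  have hm : ((m:ℝ)+1) ≠ 0 := by positivity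
  apply mul_right_cancel₀ hm
  linear_combination gchoose_succ_succ r m - gchoose_succ r m

lemma key_scalar (r : ℝ) (m j : ℕ) :
    ((m:ℝ) + j + 1) * gchoose (r+1) (m+1)
      = ((j:ℝ) + r + 1) * gchoose r m + j * gchoose r (m+1) := by
  have h1 := gchoose_succ_succ r m
  have h2 := gchoose_pascal r m
  linear_combination h1 + (j:ℝ) * h2

lemma lemA (k : ℕ) : (X - 1 : ℝ[X]) * derivative ((X - 1 : ℝ[X])^k) = C (k:ℝ) * (X-1)^k := by
  cases k with
  | zero => simp
  | succ k =>
    rw [derivative_pow]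
    simp only [derivative_sub, derivative_X, derivative_one, sub_zero, mul_one]
    push_cast
    ring

lemma lemB (m : ℕ) : (X : ℝ[X]) * derivative ((X : ℝ[X])^m) = C (m:ℝ) * X^m := by
  cases m with
  | zero => simp
  | succ m =>
    rw [derivative_pow]
    simp only [derivative_X, mul_one]
    push_cast
    ring

lemma key_deriv (k m : ℕ) :
    X * (X - 1) * derivative ((X - 1 : ℝ[X])^k * X^m) =
      C (k:ℝ) * ((X-1)^k * X^(m+1)) + C (m:ℝ) * ((X-1)^(k+1) * X^m) := by
  rw [derivative_mul]
  linear_combination (X:ℝ[X])^(m+1) * lemA k + ((X-1:ℝ[X]))^(k+1) * lemB m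

lemma half_comp1 : (C (1/2 : ℝ) * (X - 1)).comp (2 * X - 1) = X - 1 := by
  simp only [mul_comp, C_comp, sub_comp, X_comp, one_comp]
  rw [show (2 * X - 1 - 1 : ℝ[X]) = C 2 * (X - 1) by
    rw [show (C 2 : ℝ[X]) = ((2:ℕ):ℝ[X]) by rw [← C_eq_natCast]; norm_num]; push_cast; ring]
  rw [← mul_assoc, ← C_mul]
  norm_num

lemma half_comp2 : (C (1/2 : ℝ) * (X + 1)).comp (2 * X - 1) = X := by
  simp only [mul_comp, C_comp, add_comp, X_comp, one_comp]
  rw [show (2 * X - 1 + 1 : ℝ[X]) = C 2 * X by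
    rw [show (C 2 : ℝ[X]) = ((2:ℕ):ℝ[X]) by rw [← C_eq_natCast]; norm_num]; push_cast; ring]
  rw [← mul_assoc, ← C_mul]
  norm_num

lemma jacobiP_comp (n : ℕ) (a b : ℝ) :
    (jacobiP n a b).comp (2 * X - 1) =
      ∑ k ∈ range (n+1), C (gchoose (a+n) (n-k) * gchoose (b+n) k)
        * ((X - 1 : ℝ[X])^k * X^(n-k)) := by
  rw [jacobiP]
  rw [Polynomial.sum_comp]
  refine Finset.sum_congr rfl fun k _ => ?_
  rw [mul_comp, mul_comp, pow_comp, pow_comp, C_comp, half_comp1, half_comp2, mul_assoc]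

lemma main_combine (n : ℕ) (c : ℕ → ℝ) (v w : ℝ) :
    X * (X - 1) * derivative (∑ k ∈ range (n+1), C (c k) * ((X-1:ℝ[X])^k * X^(n-k)))
      + (X * C v + C w) * ∑ k ∈ range (n+1), C (c k) * ((X-1:ℝ[X])^k * X^(n-k))
    = (∑ k ∈ range (n+1), C (((k:ℝ) + v + w) * c k) * ((X-1:ℝ[X])^k * X^(n+1-k)))
      + ∑ k ∈ range (n+1), C (((n:ℝ) - k - w) * c k) * ((X-1:ℝ[X])^(k+1) * X^(n-k)) := by
  rw [derivative_sum, Finset.mul_sum, Finset.mul_sum, ← Finset.sum_add_distrib,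
    ← Finset.sum_add_distrib]
  refine Finset.sum_congr rfl fun k hk => ?_
  have hk' : k ≤ n := by have := mem_range.mp hk; omega
  have e1 : (X:ℝ[X])^(n+1-k) = X^((n-k)+1) := by congr 1; omega
  rw [e1, derivative_C_mul]
  have h2 : X * (X - 1) * (C (c k) * derivative ((X - 1 : ℝ[X])^k * X^(n-k)))
      = C (c k) * (X * (X-1) * derivative ((X - 1 : ℝ[X])^k * X^(n-k))) := by ring
  rw [h2, key_deriv k (n-k), Nat.cast_sub hk']
  simp only [map_mul, map_add, map_sub, C_1]
  ring

lemma sum_shift_combine (n : ℕ) (A B E : ℕ → ℝ)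
    (h0 : E 0 = A 0) (hmid : ∀ k < n, E (k+1) = A (k+1) + B k) (htop : E (n+1) = B n) :
    (∑ k ∈ range (n+1), C (A k) * ((X-1:ℝ[X])^k * X^(n+1-k)))
      + (∑ k ∈ range (n+1), C (B k) * ((X-1:ℝ[X])^(k+1) * X^(n-k)))
    = ∑ k ∈ range (n+2), C (E k) * ((X-1:ℝ[X])^k * X^(n+1-k)) := by
  have eB : ∀ k ∈ range (n+1), C (B k) * ((X-1:ℝ[X])^(k+1) * X^(n-k))
      = C (B k) * ((X-1:ℝ[X])^(k+1) * X^(n+1-(k+1))) := by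
    intro k hk
    have h : n - k = n + 1 - (k + 1) := by omega
    rw [h]
  rw [Finset.sum_congr rfl eB]
  rw [Finset.sum_range_succ (f := fun k => C (E k) * ((X-1:ℝ[X])^k * X^(n+1-k)))]
  rw [Finset.sum_range_succ' (f := fun k => C (E k) * ((X-1:ℝ[X])^k * X^(n+1-k)))]
  rw [Finset.sum_range_succ (f := fun k => C (B k) * ((X-1:ℝ[X])^(k+1) * X^(n+1-(k+1))))]
  rw [Finset.sum_range_succ' (f := fun k => C (A k) * ((X-1:ℝ[X])^k * X^(n+1-k)))]
  rw [h0, htop]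
  have hc : ∀ k ∈ range n, C (E (k+1)) * ((X-1:ℝ[X])^(k+1) * X^(n+1-(k+1)))
      = C (A (k+1)) * ((X-1:ℝ[X])^(k+1) * X^(n+1-(k+1)))
        + C (B k) * ((X-1:ℝ[X])^(k+1) * X^(n+1-(k+1))) := by
    intro k hk
    rw [hmid k (mem_range.mp hk), C_add]
    ring
  rw [Finset.sum_congr rfl hc, Finset.sum_add_distrib]
  ring

/-- the contiguity relation
`u(u−1)·(d/du)[P_{ℓ−1}^{(a,−p−1)}(2u−1)] = ℓ·P_ℓ^{(a,−p−2)}(2u−1) − (u(q+1−ℓ)+p+1)·P_{ℓ−1}^{(a,−p−1)}(2u−1)`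
with `a = q+p−2ℓ+2`. -/
theorem stmt13 (ℓ : ℕ) (hℓ : 1 ≤ ℓ) (p q : ℝ) :
    let a : ℝ := q + p - 2 * ℓ + 2
    Polynomial.X * (Polynomial.X - 1) *
        Polynomial.derivative ((jacobiP (ℓ - 1) a (-p - 1)).comp (2 * Polynomial.X - 1)) =
      Polynomial.C (ℓ : ℝ) * (jacobiP ℓ a (-p - 2)).comp (2 * Polynomial.X - 1)
        - (Polynomial.X * Polynomial.C (q + 1 - (ℓ : ℝ)) + Polynomial.C (p + 1))
            * (jacobiP (ℓ - 1) a (-p - 1)).comp (2 * Polynomial.X - 1) := by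
  intro a
  have ha : a = q + p - 2 * (ℓ:ℝ) + 2 := rfl
  obtain ⟨n, rfl⟩ : ∃ n, ℓ = n + 1 := ⟨ℓ - 1, by omega⟩
  push_cast at ha
  simp only [Nat.add_sub_cancel]
  rw [jacobiP_comp, jacobiP_comp, eq_sub_iff_add_eq, main_combine]
  rw [Finset.mul_sum]
  have hR : ∀ k ∈ range (n+1+1),
      C ((↑(n+1):ℝ)) * (C (gchoose (a + ↑(n+1)) (n+1-k) * gchoose (-p-2+↑(n+1)) k)
        * ((X-1:ℝ[X])^k * X^(n+1-k)))
      = C (((↑n:ℝ)+1) * (gchoose (a + ↑n + 1) (n+1-k) * gchoose (-p-1+↑n) k))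
        * ((X-1:ℝ[X])^k * X^(n+1-k)) := by
    intro k hk
    have harg1 : (a + (↑(n+1):ℝ)) = a + ↑n + 1 := by push_cast; ring
    have harg2 : (-p-2 + (↑(n+1):ℝ)) = -p-1 + ↑n := by push_cast; ring
    rw [harg1, harg2, ← mul_assoc, ← C_mul]
    norm_num
  rw [Finset.sum_congr rfl hR]
  refine sum_shift_combine n
    (fun k => ((k:ℝ) + (q+1-(↑(n+1):ℝ)) + (p+1))
      * (gchoose (a+↑n) (n-k) * gchoose (-p-1+↑n) k))
    (fun k => ((n:ℝ) - k - (p+1)) * (gchoose (a+↑n) (n-k) * gchoose (-p-1+↑n) k))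
    (fun k => ((↑n:ℝ)+1) * (gchoose (a+↑n+1) (n+1-k) * gchoose (-p-1+↑n) k))
    ?_ ?_ ?_
  · -- E 0 = A 0
    simp only [Nat.sub_zero, gchoose_zero, mul_one]
    have ks := key_scalar (a+↑n) n 0
    push_cast at ks ⊢
    linear_combination ks + gchoose (a+↑n) n * ha
  · -- middle
    intro k hk
    obtain ⟨m, hm⟩ : ∃ m, n - k = m + 1 := ⟨n-k-1, by omega⟩
    rw [show n+1-(k+1) = m+1 by omega, show n-(k+1) = m by omega, hm]
    have hm' : (m:ℝ) = (n:ℝ) - k - 1 := by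
      have h2 : ((n - k : ℕ) : ℝ) = (m:ℝ) + 1 := by exact_mod_cast congrArg Nat.cast hm
      rw [Nat.cast_sub (by omega)] at h2
      linarith
    have ks := key_scalar (a+↑n) m (k+1)
    have gs := gchoose_succ (-p-1+↑n) k
    push_cast at ks gs ⊢
    linear_combination gchoose (-p-1+↑n) (k+1) * ks + gchoose (a+↑n) (m+1) * gs
      - gchoose (a+↑n+1) (m+1) * gchoose (-p-1+↑n) (k+1) * hm'
      + gchoose (a+↑n) m * gchoose (-p-1+↑n) (k+1) * ha
  · -- top
    simp only [Nat.sub_self, Nat.add_sub_cancel, gchoose_zero, mul_one, one_mul]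
    have gs := gchoose_succ (-p-1+↑n) n
    push_cast at gs ⊢
    linear_combination gs

end
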